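/- arXiv:2005.00566 — 2 statements merged into one kernel-verified Lean document; each statement's English description precedes it below -/
import Mathlib

section
/- For any boolean function f : {0,1}^n → {0,1}, bs(f) ≤ 5·(deg̃_{1/3}(f))², where deg̃_{1/3}(f) is the least degree of a real multilinear polynomial p with |p(x) − f(x)| ≤ 1/3 for all x ∈ {0,1}^n. -/
open Finset
open scoped Classical

namespace BF

noncomputable section

/-- flip the bits of `x` belonging to `B`. -/
def flipS {n : ℕ} (x : Fin n → Bool) (B : Finset (Fin n)) : Fin n → Bool :=
  fun i => if i ∈ B then !(x i) else x i

/-- flip the `i`-th bit of `x`. -/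
def flip1 {n : ℕ} (x : Fin n → Bool) (i : Fin n) : Fin n → Bool :=
  fun j => if j = i then !(x j) else x j

/-- real value of a boolean. -/
def bval (b : Bool) : ℝ := if b then 1 else 0

/-- coefficient of the monomial `∏_{i ∈ S} x_i` in the unique multilinear
real polynomial expansion of `f` (Möbius inversion over the subcube lattice). -/
def coeffS {n : ℕ} (f : (Fin n → Bool) → ℝ) (S : Finset (Fin n)) : ℝ :=
  ∑ T ∈ S.powerset, (-1 : ℝ) ^ (S.card - T.card) * f (fun i => decide (i ∈ T))

/-- degree of the multilinear expansion of a real-valued function on the cube. -/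
def degF {n : ℕ} (f : (Fin n → Bool) → ℝ) : ℕ :=
  (Finset.univ.filter fun S : Finset (Fin n) => coeffS f S ≠ 0).sup Finset.card

/-- degree of a boolean function. -/
def degB {n : ℕ} (f : (Fin n → Bool) → Bool) : ℕ := degF (fun x => bval (f x))

/-- block sensitivity of `f` at `x`. -/
def bsAt {n : ℕ} (f : (Fin n → Bool) → Bool) (x : Fin n → Bool) : ℕ :=
  (Finset.univ.filter fun 𝓑 : Finset (Finset (Fin n)) =>
      (∀ B ∈ 𝓑, f (flipS x B) ≠ f x) ∧
      ∀ A ∈ 𝓑, ∀ B ∈ 𝓑, A ≠ B → Disjoint A B).sup Finset.card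

/-- block sensitivity of `f`. -/
def bs {n : ℕ} (f : (Fin n → Bool) → Bool) : ℕ := Finset.univ.sup (bsAt f)

/-- sensitivity of `f` at `x`. -/
def sx {n : ℕ} (f : (Fin n → Bool) → Bool) (x : Fin n → Bool) : ℕ :=
  (Finset.univ.filter fun i => f (flip1 x i) ≠ f x).card

/-- (maximum) sensitivity of `f`. -/
def sens {n : ℕ} (f : (Fin n → Bool) → Bool) : ℕ := Finset.univ.sup (sx f)

/-- coordinate `i` is relevant for `f`. -/
def Rel {n : ℕ} (i : Fin n) (f : (Fin n → Bool) → Bool) : Prop :=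
  ∃ x, f (flip1 x i) ≠ f x

/-- the set of relevant coordinates of `f`. -/
def relSet {n : ℕ} (f : (Fin n → Bool) → Bool) : Finset (Fin n) :=
  Finset.univ.filter fun i => Rel i f

/-- the number of relevant variables `n(f)`. -/
def nrel {n : ℕ} (f : (Fin n → Bool) → Bool) : ℕ := (relSet f).card

/-- influence of coordinate `i` on `f` (uniform distribution). -/
def infl {n : ℕ} (f : (Fin n → Bool) → Bool) (i : Fin n) : ℝ :=
  ((Finset.univ.filter fun x : Fin n → Bool => f x ≠ f (flip1 x i)).card : ℝ) / 2 ^ n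

/-- total influence `I[f]`. -/
def totalInf {n : ℕ} (f : (Fin n → Bool) → Bool) : ℝ := ∑ i, infl f i

/-- restriction of `f` fixing the coordinates in `H` according to `α`
(viewed as a function on the full cube not depending on the coordinates in `H`). -/
def restrict {n : ℕ} (f : (Fin n → Bool) → Bool) (H : Finset (Fin n))
    (α : Fin n → Bool) : (Fin n → Bool) → Bool :=
  fun x => f (fun i => if i ∈ H then α i else x i)

/-- certificate complexity of `f` at `x`. -/
def certAt {n : ℕ} (f : (Fin n → Bool) → Bool) (x : Fin n → Bool) : ℕ :=
  sInf {k | ∃ S : Finset (Fin n), S.card = k ∧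
    ∀ y, (∀ i ∈ S, y i = x i) → f y = f x}

/-- certificate complexity `C(f)`. -/
def certC {n : ℕ} (f : (Fin n → Bool) → Bool) : ℕ := Finset.univ.sup (certAt f)

/-- `f` is in standard form: `f(0) = 0` and `f(e_i) = 1` for every basis vector. -/
def stdForm {b : ℕ} (f : (Fin b → Bool) → Bool) : Prop :=
  f (fun _ => false) = false ∧ ∀ i : Fin b, f (fun j => decide (j = i)) = true

end

end BF

open BF

/-!
Fix `x` and disjoint sensitive blocks `B₁, …, B_k` with `k = bs f`, and let `p` be the
approximating polynomial. Flipping every block independently with probability `t` and averaging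
`p` gives a univariate polynomial `q(t)`. Because the blocks are disjoint, `deg q ≤ deg p ≤ d`,
and as an average of values of `p` it stays within `5/6` of `1/2` on `[0, 1]`. Its slope at `0`
is `∑ᵢ (p(x^{Bᵢ}) - p(x))`, a sum of `k` terms of the same sign and size at least `1/3`, so
`k/3 ≤ |q'(0)|`, while Markov's inequality gives `|q'(0)| ≤ 2d² · 5/6`.
-/

namespace Polynomial

open _root_.Polynomial.Chebyshev in
/-- Markov's inequality at an endpoint. -/
theorem abs_derivative_eval_one_le {P : ℝ[X]} {d : ℕ} {M : ℝ} (hM : 0 < M)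
    (hdeg : P.natDegree ≤ d) (hbound : ∀ x ∈ Set.Icc (-1 : ℝ) 1, |P.eval x| ≤ M) :
    |(derivative P).eval 1| ≤ d ^ 2 * M := by
  have hT : (derivative (T ℝ d)).eval 1 = d ^ 2 := by
    simpa using derivative_T_eval_one (R := ℝ) d
  have hside : ∀ ε : ℝ, |ε| = 1 → ε * (derivative P).eval 1 ≤ d ^ 2 * M := by
    intro ε hε
    have h := eval_iterate_derivative_le_of_forall_abs_le_one (k := 1) le_rfl
      (degree_le_of_natDegree_le ((natDegree_C_mul_le _ _).trans hdeg))
      (P := C (ε / M) * P) fun x hx => by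
        rw [eval_mul, eval_C, abs_mul, abs_div, hε, abs_of_pos hM, div_mul_eq_mul_div, one_mul,
          div_le_one hM]
        exact hbound x hx
    simp only [Function.iterate_one, derivative_C_mul, eval_mul, eval_C, hT] at h
    rwa [div_mul_eq_mul_div, div_le_iff₀ hM] at h
  rw [abs_le]
  constructor
  · linarith [hside (-1) (by simp)]
  · simpa using hside 1 (by simp)

theorem abs_derivative_eval_zero_le_of_unitInterval {q : ℝ[X]} {d : ℕ} {a M : ℝ} (hM : 0 < M)
    (hdeg : q.natDegree ≤ d) (hbound : ∀ t ∈ Set.Icc (0 : ℝ) 1, |q.eval t - a| ≤ M) :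
    |(derivative q).eval 0| ≤ 2 * d ^ 2 * M := by
  set P := (q - C a).comp (C (1 / 2 : ℝ) * (1 - X))
  have hPdeg : P.natDegree ≤ d := by
    have hlin : (C (1 / 2 : ℝ) * (1 - X)).natDegree ≤ 1 :=
      (natDegree_C_mul_le _ _).trans (by simpa using natDegree_sub_le (1 : ℝ[X]) X)
    calc P.natDegree ≤ (q - C a).natDegree * 1 :=
          natDegree_comp_le.trans (Nat.mul_le_mul_left _ hlin)
      _ ≤ d := by simpa using (natDegree_sub_C (a := a)).le.trans hdeg
  have hPeval : ∀ s, P.eval s = q.eval (1 / 2 * (1 - s)) - a := fun s => by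
    simp only [P, eval_comp, eval_sub, eval_mul, eval_C, eval_one, eval_X]
  have hPderiv : (derivative P).eval 1 = -(derivative q).eval 0 / 2 := by
    simp only [P, derivative_comp, derivative_sub, derivative_C_mul, derivative_one, derivative_X,
      derivative_C, eval_mul, eval_comp, eval_sub, eval_C, eval_one, eval_X, eval_zero, sub_self,
      mul_zero]
    ring
  have h := abs_derivative_eval_one_le hM hPdeg fun s hs => by
    rw [hPeval]
    exact hbound _ ⟨by linarith [hs.2], by linarith [hs.1]⟩
  rw [hPderiv, abs_div, abs_neg, abs_two] at h
  linarith

theorem natDegree_prod_affine_le {α : Type*} (s : Finset α) (u v : α → ℝ) :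
    (∏ b ∈ s, (C (u b) * X + C (v b) * (1 - X))).natDegree ≤ #{b ∈ s | u b ≠ v b} := by
  rw [Finset.card_filter]
  refine (natDegree_prod_le _ _).trans (Finset.sum_le_sum fun b _ => ?_)
  split_ifs with h
  · exact (natDegree_add_le _ _).trans (max_le ((natDegree_C_mul_le _ _).trans natDegree_X_le)
      ((natDegree_C_mul_le _ _).trans (natDegree_sub_le_of_le natDegree_one.le natDegree_X_le)))
  · rw [not_not.1 h, ← mul_add, add_sub_cancel, mul_one, natDegree_C]

end Polynomial

namespace BF

open Polynomial

section DiagonalExtension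

variable {α : Type*} [DecidableEq α]

/-- The multilinear extension of `g : 𝒫 s → ℝ` restricted to the diagonal `(t, …, t)`: the
expected value of `g W` when each element of `s` lies in `W` independently with probability `t`. -/
noncomputable def diagonalExtension (s : Finset α) (g : Finset α → ℝ) : ℝ[X] :=
  ∑ W ∈ s.powerset, C (g W) * (X ^ #W * (1 - X) ^ #(s \ W))

theorem sum_powerset_pow_mul_one_sub_pow (s : Finset α) (t : ℝ) :
    ∑ W ∈ s.powerset, t ^ #W * (1 - t) ^ #(s \ W) = 1 := by
  simpa using (Finset.prod_add (fun _ => t) (fun _ => 1 - t) s).symm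

theorem abs_eval_diagonalExtension_sub_le {s : Finset α} {g : Finset α → ℝ} {a M t : ℝ}
    (hg : ∀ W ⊆ s, |g W - a| ≤ M) (ht : t ∈ Set.Icc (0 : ℝ) 1) :
    |(diagonalExtension s g).eval t - a| ≤ M := by
  have hw : ∀ W, 0 ≤ t ^ #W * (1 - t) ^ #(s \ W) := fun W =>
    mul_nonneg (pow_nonneg ht.1 _) (pow_nonneg (sub_nonneg.2 ht.2) _)
  have hsum := sum_powerset_pow_mul_one_sub_pow s t
  have heval : (diagonalExtension s g).eval t - a
      = ∑ W ∈ s.powerset, (g W - a) * (t ^ #W * (1 - t) ^ #(s \ W)) := by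
    simp only [diagonalExtension, eval_finsetSum, eval_mul, eval_C, eval_pow, eval_X, eval_sub,
      eval_one, sub_mul, Finset.sum_sub_distrib, ← Finset.mul_sum, hsum, mul_one]
  calc |(diagonalExtension s g).eval t - a|
      ≤ ∑ W ∈ s.powerset, |g W - a| * (t ^ #W * (1 - t) ^ #(s \ W)) := by
        rw [heval]
        refine (Finset.abs_sum_le_sum_abs _ _).trans_eq (Finset.sum_congr rfl fun W _ => ?_)
        rw [abs_mul, abs_of_nonneg (hw W)]
    _ ≤ ∑ W ∈ s.powerset, M * (t ^ #W * (1 - t) ^ #(s \ W)) :=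
        Finset.sum_le_sum fun W hW => mul_le_mul_of_nonneg_right (hg W (mem_powerset.1 hW)) (hw W)
    _ = M := by rw [← Finset.mul_sum, hsum, mul_one]

theorem eval_zero_derivative_X_pow_mul_one_sub_X_pow (m k : ℕ) :
    (derivative (X ^ m * (1 - X) ^ k : ℝ[X])).eval 0
      = (if m = 1 then 1 else 0) - if m = 0 then (k : ℝ) else 0 := by
  rcases m with _ | _ | m <;> simp [derivative_mul, derivative_pow]

theorem eval_zero_derivative_diagonalExtension (s : Finset α) (g : Finset α → ℝ) :
    (derivative (diagonalExtension s g)).eval 0 = ∑ b ∈ s, (g {b} - g ∅) := by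
  simp only [diagonalExtension, derivative_sum, derivative_C_mul, eval_finsetSum, eval_mul,
    eval_C, eval_zero_derivative_X_pow_mul_one_sub_X_pow, mul_sub, mul_ite, mul_one, mul_zero,
    Finset.sum_sub_distrib]
  rw [← Finset.sum_filter, ← Finset.sum_filter, ← powersetCard_eq_filter, ← powersetCard_eq_filter,
    powersetCard_one, powersetCard_zero, Finset.sum_map, Finset.sum_singleton, Finset.sum_const]
  simp [mul_comm]

theorem diagonalExtension_congr {s : Finset α} {g g' : Finset α → ℝ} (h : ∀ W ⊆ s, g W = g' W) :
    diagonalExtension s g = diagonalExtension s g' :=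
  Finset.sum_congr rfl fun W hW => by rw [h W (mem_powerset.1 hW)]

theorem diagonalExtension_sum_mul {ι : Type*} (s : Finset α) (I : Finset ι) (a : ι → ℝ)
    (g : ι → Finset α → ℝ) :
    diagonalExtension s (fun W => ∑ i ∈ I, a i * g i W)
      = ∑ i ∈ I, C (a i) * diagonalExtension s (g i) := by
  simp only [diagonalExtension, map_sum, map_mul, Finset.sum_mul, Finset.mul_sum, mul_assoc]
  exact Finset.sum_comm

theorem diagonalExtension_prod_ite (s : Finset α) (u v : α → ℝ) :
    diagonalExtension s (fun W => ∏ b ∈ s, if b ∈ W then u b else v b)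
      = ∏ b ∈ s, (C (u b) * X + C (v b) * (1 - X)) := by
  rw [Finset.prod_add, diagonalExtension]
  refine Finset.sum_congr rfl fun W hW => ?_
  rw [Finset.prod_ite, Finset.filter_mem_eq_inter, Finset.inter_eq_right.2 (mem_powerset.1 hW),
    Finset.filter_not, Finset.filter_mem_eq_inter, Finset.inter_eq_right.2 (mem_powerset.1 hW)]
  simp only [Finset.prod_mul_distrib, Finset.prod_const, map_mul, map_prod]
  ring

end DiagonalExtension

theorem card_filter_inter_nonempty_le {ι : Type*} [DecidableEq ι] {𝓑 : Finset (Finset ι)}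
    (h𝓑 : (𝓑 : Set (Finset ι)).PairwiseDisjoint id) (S : Finset ι) :
    #{B ∈ 𝓑 | (S ∩ B).Nonempty} ≤ #S :=
  card_le_card_of_forall_subsingleton (fun B i => i ∈ B)
    (fun B hB => by simpa [Finset.Nonempty] using (mem_filter.1 hB).2)
    fun i _ A hA B hB => h𝓑.elim (mem_filter.1 hA.1).1 (mem_filter.1 hB.1).1
      (Finset.not_disjoint_iff.2 ⟨i, hA.2, hB.2⟩)

variable {n : ℕ}

noncomputable def evalMultilinear (c : Finset (Fin n) → ℝ) (y : Fin n → Bool) : ℝ :=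
  ∑ S : Finset (Fin n), c S * ∏ i ∈ S, bval (y i)

@[simp]
theorem bval_true : bval true = 1 := rfl

@[simp]
theorem bval_false : bval false = 0 := rfl

@[simp]
theorem flipS_empty (x : Fin n → Bool) : flipS x ∅ = x := by
  funext i
  simp [flipS]

theorem exists_sensitive_blocks_card_eq_bs (f : (Fin n → Bool) → Bool) :
    ∃ (x : Fin n → Bool) (𝓑 : Finset (Finset (Fin n))), #𝓑 = bs f ∧
      (∀ B ∈ 𝓑, f (flipS x B) ≠ f x) ∧ (𝓑 : Set (Finset (Fin n))).PairwiseDisjoint id := by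
  obtain ⟨x, -, hx⟩ := Finset.exists_mem_eq_sup univ univ_nonempty (bsAt f)
  obtain ⟨𝓑, h𝓑, hcard⟩ := Finset.exists_mem_eq_sup (univ.filter fun 𝓑 : Finset (Finset (Fin n)) =>
    (∀ B ∈ 𝓑, f (flipS x B) ≠ f x) ∧ ∀ A ∈ 𝓑, ∀ B ∈ 𝓑, A ≠ B → Disjoint A B) ⟨∅, by simp⟩ card
  rw [Finset.mem_filter] at h𝓑
  exact ⟨x, 𝓑, by rw [bs, hx, bsAt, hcard], h𝓑.2.1, fun A hA B hB => h𝓑.2.2 A hA B hB⟩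

section Approximation

variable {f : (Fin n → Bool) → Bool} {c : Finset (Fin n) → ℝ}
  (happrox : ∀ x, |evalMultilinear c x - bval (f x)| ≤ 1 / 3)
include happrox

theorem abs_evalMultilinear_sub_half_le (y : Fin n → Bool) :
    |evalMultilinear c y - 1 / 2| ≤ 5 / 6 := by
  have h := happrox y
  cases hfy : f y <;> rw [hfy] at h <;> simp only [bval_true, bval_false, abs_le] at h ⊢ <;>
    constructor <;> linarith [h.1, h.2]

theorem one_third_le_sign_mul_sub {x y : Fin n → Bool} (hxy : f y ≠ f x) :
    1 / 3 ≤ (1 - 2 * bval (f x)) * (evalMultilinear c y - evalMultilinear c x) := by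
  have hx := happrox x
  have hy := happrox y
  rw [Bool.eq_not.2 hxy] at hy
  cases hfx : f x <;>
    simp only [hfx, Bool.not_false, Bool.not_true, bval_true, bval_false, abs_le] at hx hy ⊢ <;>
    linarith [hx.1, hx.2, hy.1, hy.2]

theorem card_div_three_le_abs_sum {ι : Type*} {𝓑 : Finset ι} {x : Fin n → Bool}
    (y : ι → Fin n → Bool) (hy : ∀ B ∈ 𝓑, f (y B) ≠ f x) :
    (#𝓑 : ℝ) / 3 ≤ |∑ B ∈ 𝓑, (evalMultilinear c (y B) - evalMultilinear c x)| := by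
  have hsign : |1 - 2 * bval (f x)| = 1 := by cases f x <;> norm_num
  calc (#𝓑 : ℝ) / 3 = ∑ _B ∈ 𝓑, (1 / 3 : ℝ) := by rw [Finset.sum_const, nsmul_eq_mul]; ring
    _ ≤ ∑ B ∈ 𝓑, (1 - 2 * bval (f x)) * (evalMultilinear c (y B) - evalMultilinear c x) :=
        Finset.sum_le_sum fun B hB => one_third_le_sign_mul_sub happrox (hy B hB)
    _ ≤ |∑ B ∈ 𝓑, (evalMultilinear c (y B) - evalMultilinear c x)| := by
        rw [← Finset.mul_sum]
        exact (le_abs_self _).trans (by rw [abs_mul, hsign, one_mul])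

end Approximation

theorem flipS_biUnion_apply {x : Fin n → Bool} {𝓑 W : Finset (Finset (Fin n))}
    (h𝓑 : (𝓑 : Set (Finset (Fin n))).PairwiseDisjoint id) (hW : W ⊆ 𝓑) {B : Finset (Fin n)}
    (hB : B ∈ 𝓑) {i : Fin n} (hi : i ∈ B) :
    flipS x (W.biUnion id) i = if B ∈ W then !x i else x i := by
  have hmem : i ∈ W.biUnion id ↔ B ∈ W := by
    refine ⟨fun h => ?_, fun h => mem_biUnion.2 ⟨B, h, hi⟩⟩
    obtain ⟨B', hB', hiB'⟩ := mem_biUnion.1 h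
    rwa [h𝓑.elim hB (hW hB') (Finset.not_disjoint_iff.2 ⟨i, hi, hiB'⟩)]
  simp only [flipS, hmem]

theorem prod_bval_flipS_biUnion {x : Fin n → Bool} {𝓑 W : Finset (Finset (Fin n))}
    (h𝓑 : (𝓑 : Set (Finset (Fin n))).PairwiseDisjoint id) (hW : W ⊆ 𝓑) (S : Finset (Fin n)) :
    ∏ i ∈ S, bval (flipS x (W.biUnion id) i)
      = (∏ i ∈ S \ 𝓑.biUnion id, bval (x i)) *
        ∏ B ∈ 𝓑, if B ∈ W then ∏ i ∈ S ∩ B, bval (!x i) else ∏ i ∈ S ∩ B, bval (x i) := by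
  have hS : S ∩ 𝓑.biUnion id = 𝓑.biUnion (S ∩ ·) := inter_biUnion _ _ _
  have hdisj : (𝓑 : Set (Finset (Fin n))).PairwiseDisjoint (S ∩ ·) := fun A hA B hB hAB =>
    (h𝓑 hA hB hAB).mono inter_subset_right inter_subset_right
  rw [← Finset.prod_sdiff (inter_subset_left : S ∩ 𝓑.biUnion id ⊆ S), sdiff_inter_self_left, hS,
    prod_biUnion hdisj]
  congr 1
  · refine Finset.prod_congr rfl fun i hi => ?_
    have hi' : i ∉ W.biUnion id := fun h =>
      (mem_sdiff.1 hi).2 (biUnion_subset_biUnion_of_subset_left _ hW h)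
    simp only [flipS, if_neg hi']
  · refine Finset.prod_congr rfl fun B hB => ?_
    split_ifs with hBW <;> refine Finset.prod_congr rfl fun i hi => ?_ <;>
      rw [flipS_biUnion_apply h𝓑 hW hB (mem_inter.1 hi).2] <;> simp [hBW]

theorem natDegree_diagonalExtension_flipS_le {x : Fin n → Bool} {𝓑 : Finset (Finset (Fin n))}
    (h𝓑 : (𝓑 : Set (Finset (Fin n))).PairwiseDisjoint id) {c : Finset (Fin n) → ℝ} {d : ℕ}
    (hdeg : ∀ S, c S ≠ 0 → #S ≤ d) :
    (diagonalExtension 𝓑 fun W => evalMultilinear c (flipS x (W.biUnion id))).natDegree ≤ d := by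
  set u : Finset (Fin n) → Finset (Fin n) → ℝ := fun S B => ∏ i ∈ S ∩ B, bval (!x i)
  set v : Finset (Fin n) → Finset (Fin n) → ℝ := fun S B => ∏ i ∈ S ∩ B, bval (x i)
  have hq : (diagonalExtension 𝓑 fun W => evalMultilinear c (flipS x (W.biUnion id)))
      = ∑ S, C (c S * ∏ i ∈ S \ 𝓑.biUnion id, bval (x i)) *
          ∏ B ∈ 𝓑, (C (u S B) * X + C (v S B) * (1 - X)) := by
    rw [diagonalExtension_congr (g' := fun W => ∑ S, (c S * ∏ i ∈ S \ 𝓑.biUnion id, bval (x i)) *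
      ∏ B ∈ 𝓑, if B ∈ W then u S B else v S B) fun W hW => ?_, diagonalExtension_sum_mul]
    · simp only [diagonalExtension_prod_ite]
    · simp only [evalMultilinear, prod_bval_flipS_biUnion h𝓑 hW, mul_assoc, u, v]
  rw [hq]
  refine natDegree_sum_le_of_forall_le _ _ fun S _ => ?_
  by_cases hc : c S = 0
  · simp [hc]
  have hmeets : ∀ B, u S B ≠ v S B → (S ∩ B).Nonempty := fun B h => by
    by_contra hempty
    simp [u, v, Finset.not_nonempty_iff_eq_empty.1 hempty] at h
  calc _ ≤ _ := natDegree_C_mul_le _ _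
    _ ≤ #{B ∈ 𝓑 | u S B ≠ v S B} := natDegree_prod_affine_le _ _ _
    _ ≤ #{B ∈ 𝓑 | (S ∩ B).Nonempty} := card_le_card (monotone_filter_right _ fun B _ => hmeets B)
    _ ≤ #S := card_filter_inter_nonempty_le h𝓑 S
    _ ≤ d := hdeg S hc

end BF

/-- `bs(f) ≤ 5·(deg̃_{1/3}(f))²`: whenever a multilinear polynomial
(given by its coefficients `c`) of degree at most `d` approximates `f` to within
`1/3` pointwise on the cube, `bs(f) ≤ 5d²`. -/
theorem stmt6 {n : ℕ} (f : (Fin n → Bool) → Bool) (d : ℕ)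
    (c : Finset (Fin n) → ℝ)
    (hdeg : ∀ S : Finset (Fin n), c S ≠ 0 → S.card ≤ d)
    (happrox : ∀ x : Fin n → Bool,
      |(∑ S : Finset (Fin n), c S * ∏ i ∈ S, bval (x i)) - bval (f x)| ≤ 1 / 3) :
    (bs f : ℝ) ≤ 5 * (d : ℝ) ^ 2 := by
  obtain ⟨x, 𝓑, hcard, hsens, h𝓑⟩ := exists_sensitive_blocks_card_eq_bs f
  set q := diagonalExtension 𝓑 fun W => evalMultilinear c (flipS x (W.biUnion id))
  have hupper : |(Polynomial.derivative q).eval 0| ≤ 2 * d ^ 2 * (5 / 6) :=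
    Polynomial.abs_derivative_eval_zero_le_of_unitInterval (by norm_num)
      (natDegree_diagonalExtension_flipS_le h𝓑 hdeg) fun t ht =>
      abs_eval_diagonalExtension_sub_le (fun W _ => abs_evalMultilinear_sub_half_le happrox _) ht
  have hlower : (#𝓑 : ℝ) / 3 ≤ |(Polynomial.derivative q).eval 0| := by
    rw [eval_zero_derivative_diagonalExtension]
    simpa using card_div_three_le_abs_sum happrox (flipS x) hsens
  rw [← hcard]
  linarith
end

section
/- For every boolean function f, the number of relevant variables satisfies n(f) ≤ I[f]·2^{deg(f)−1}, where I[f] is the total influence. -/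
/-!
Let `i` be a relevant coordinate of `f` and `S ∋ i` maximal among the sets whose monomial has a
nonzero coefficient in the multilinear expansion of `f`; then `|S| ≤ deg f`. Because no proper
superset of `S` carries a nonzero coefficient, the restriction of `f` to any subcube spanned by
`S` still has coefficient `coeffS f S ≠ 0` on `∏_{j ∈ S} x_j`, whereas this coefficient would
vanish if `f` were insensitive to `i` on that subcube. So each of the `2^{n-|S|}` subcubes
contains an edge in direction `i` along which `f` changes, and
`Inf_i[f] ≥ 2^{1-|S|} ≥ 2^{1-deg f}`.
Summing over the relevant coordinates gives the bound.
-/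

open Finset
open scoped Classical

open BF

namespace BF

variable {n : ℕ}

lemma flip1_flip1 (x : Fin n → Bool) (i : Fin n) : flip1 (flip1 x i) i = x := by
  funext j
  by_cases hj : j = i <;> simp [flip1, hj]

lemma flip1_ne (x : Fin n → Bool) (i : Fin n) : flip1 x i ≠ x :=
  fun h => by simpa [flip1] using congrFun h i

lemma flip1_eq_update (x : Fin n → Bool) (i : Fin n) :
    flip1 x i = Function.update x i (!x i) := by
  funext t
  by_cases ht : t = i <;> simp [flip1, ht]

lemma bval_injective : Function.Injective bval := by
  intro a b h
  cases a <;> cases b <;> simp_all [bval]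

def subcubePt (S W : Finset (Fin n)) (z : Fin n → Bool) : Fin n → Bool :=
  fun j => if j ∈ S then decide (j ∈ W) else z j

/-- `coeffS G S` computed for the restriction of `G` to the subcube spanned by `S` through `z`. -/
def restrCoeff (G : (Fin n → Bool) → ℝ) (S : Finset (Fin n)) (z : Fin n → Bool) : ℝ :=
  ∑ W ∈ S.powerset, (-1 : ℝ) ^ (S.card - W.card) * G (subcubePt S W z)

lemma subcubePt_singleton_empty (i : Fin n) (z : Fin n → Bool) :
    subcubePt {i} ∅ z = Function.update z i false := by
  funext t
  by_cases ht : t = i <;> simp [subcubePt, ht]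

lemma subcubePt_insert_of_notMem {S W : Finset (Fin n)} {j : Fin n} (hjW : j ∉ W)
    (z : Fin n → Bool) :
    subcubePt (insert j S) W z = subcubePt S W (Function.update z j false) := by
  funext t
  by_cases ht : t = j
  · subst ht; by_cases hS : t ∈ S <;> simp [subcubePt, hjW, hS]
  · simp [subcubePt, ht]

lemma subcubePt_insert_insert {S : Finset (Fin n)} {j : Fin n} (hjS : j ∉ S)
    (W : Finset (Fin n)) (z : Fin n → Bool) :
    subcubePt (insert j S) (insert j W) z = subcubePt S W (Function.update z j true) := by
  funext t
  by_cases ht : t = j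
  · subst ht; simp [subcubePt, hjS]
  · simp [subcubePt, ht]

lemma subcubePt_insert_right {S W : Finset (Fin n)} {i : Fin n} (hiS : i ∈ S) (hiW : i ∉ W)
    (z : Fin n → Bool) :
    subcubePt S (insert i W) z = flip1 (subcubePt S W z) i := by
  funext t
  by_cases ht : t = i
  · subst ht; simp [subcubePt, flip1, hiS, hiW]
  · simp [subcubePt, flip1, ht]

lemma restrCoeff_update_true (G : (Fin n → Bool) → ℝ) {S : Finset (Fin n)} {j : Fin n}
    (hjS : j ∉ S) (z : Fin n → Bool) :
    restrCoeff G S (Function.update z j true) =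
      restrCoeff G S (Function.update z j false) + restrCoeff G (insert j S) z := by
  rw [restrCoeff, restrCoeff, restrCoeff, Finset.sum_powerset_insert hjS,
    ← Finset.sum_add_distrib, ← Finset.sum_add_distrib]
  refine Finset.sum_congr rfl fun W hW => ?_
  have hWS : W ⊆ S := Finset.mem_powerset.mp hW
  have hjW : j ∉ W := fun h => hjS (hWS h)
  have hle : W.card ≤ S.card := Finset.card_le_card hWS
  rw [subcubePt_insert_of_notMem hjW, subcubePt_insert_insert hjS,
    Finset.card_insert_of_notMem hjS, Finset.card_insert_of_notMem hjW,
    Nat.add_sub_add_right, Nat.sub_add_comm hle, pow_succ]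
  ring

lemma restrCoeff_eq_coeffS_of_forall_notMem (G : (Fin n → Bool) → ℝ) (S : Finset (Fin n))
    {z : Fin n → Bool} (hz : ∀ j ∉ S, z j = false) : restrCoeff G S z = coeffS G S := by
  refine Finset.sum_congr rfl fun W hW => ?_
  congr 2
  funext t
  by_cases htS : t ∈ S
  · simp [subcubePt, htS]
  · have htW : t ∉ W := fun h => htS (Finset.mem_powerset.mp hW h)
    simp [subcubePt, htS, htW, hz t htS]

/-- Raising a coordinate `j ∉ S` of `z` adds
`restrCoeff G (insert j S) = coeffS G (insert j S) = 0`, so `z` can be lowered to `0` outside `S`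
one coordinate at a time. -/
lemma restrCoeff_eq_coeffS (G : (Fin n → Bool) → ℝ) {S : Finset (Fin n)}
    (hmax : ∀ T, S ⊂ T → coeffS G T = 0) (z : Fin n → Bool) :
    restrCoeff G S z = coeffS G S := by
  suffices ∀ U : Finset (Fin n), ∀ S z, (∀ T, S ⊂ T → coeffS G T = 0) →
      (∀ j ∉ S, z j = true → j ∈ U) → restrCoeff G S z = coeffS G S from
    this Finset.univ S z hmax fun j _ _ => Finset.mem_univ j
  intro U
  induction U using Finset.induction_on with
  | empty =>
    intro S z _ hz
    refine restrCoeff_eq_coeffS_of_forall_notMem G S fun j hj => ?_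
    simpa using mt (hz j hj)
  | insert j U _ ih =>
    intro S z hmax hz
    by_cases hjz : j ∉ S ∧ z j = true
    · obtain ⟨hjS, hzj⟩ := hjz
      have hupd : Function.update z j true = z := by simp [← hzj]
      rw [← hupd, restrCoeff_update_true G hjS,
        ih (insert j S) z (fun T hT => hmax T ((Finset.ssubset_insert hjS).trans hT)) ?_,
        hmax _ (Finset.ssubset_insert hjS), ih S _ hmax ?_, add_zero]
      · intro t ht hzt
        have htj : t ≠ j := by rintro rfl; simp at hzt
        exact Finset.mem_of_mem_insert_of_ne (hz t ht (by simpa [htj] using hzt)) htj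
      · intro t ht hzt
        exact Finset.mem_of_mem_insert_of_ne (hz t (fun h => ht (Finset.mem_insert_of_mem h)) hzt)
          fun h => ht (h ▸ Finset.mem_insert_self j S)
    · refine ih S z hmax fun t ht hzt => ?_
      rcases Finset.mem_insert.mp (hz t ht hzt) with rfl | htU
      · exact absurd ⟨ht, hzt⟩ hjz
      · exact htU

/-- Pairing `W` with `insert i W` cancels the alternating sum. -/
lemma restrCoeff_eq_zero_of_flip1 (G : (Fin n → Bool) → ℝ) {S : Finset (Fin n)} {i : Fin n}
    (hiS : i ∈ S) (z : Fin n → Bool)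
    (hG : ∀ y, (∀ j ∉ S, y j = z j) → G (flip1 y i) = G y) :
    restrCoeff G S z = 0 := by
  have hiE : i ∉ S.erase i := Finset.notMem_erase i S
  rw [restrCoeff, ← Finset.insert_erase hiS, Finset.sum_powerset_insert hiE,
    ← Finset.sum_add_distrib, Finset.insert_erase hiS]
  refine Finset.sum_eq_zero fun W hW => ?_
  have hWE : W ⊆ S.erase i := Finset.mem_powerset.mp hW
  have hiW : i ∉ W := fun h => hiE (hWE h)
  have hlt : W.card < S.card := by
    have := Finset.card_le_card hWE
    rw [Finset.card_erase_of_mem hiS] at this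
    have := Finset.card_pos.mpr ⟨i, hiS⟩
    omega
  rw [subcubePt_insert_right hiS hiW, hG _ (fun j hj => by simp [subcubePt, hj]),
    Finset.card_insert_of_notMem hiW, show S.card - W.card = S.card - (W.card + 1) + 1 by omega,
    pow_succ]
  ring

lemma exists_sensitive_in_subcube (f : (Fin n → Bool) → Bool) {S : Finset (Fin n)} {i : Fin n}
    (hiS : i ∈ S) (hc : coeffS (fun x => bval (f x)) S ≠ 0)
    (hmax : ∀ T, S ⊂ T → coeffS (fun x => bval (f x)) T = 0) (z : Fin n → Bool) :
    ∃ y, (∀ j ∉ S, y j = z j) ∧ f (flip1 y i) ≠ f y := by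
  by_contra! h
  refine hc ?_
  rw [← restrCoeff_eq_coeffS _ hmax z]
  exact restrCoeff_eq_zero_of_flip1 _ hiS z fun y hy => by simp only [h y hy]

/-- Each of the `2 ^ (n - |S|)` subcubes spanned by `S` contributes a sensitive edge in
direction `i`, i.e. two points. -/
lemma two_pow_le_card_sensitive (f : (Fin n → Bool) → Bool) {S : Finset (Fin n)} {i : Fin n}
    (hiS : i ∈ S)
    (hsens : ∀ z : Fin n → Bool, ∃ y, (∀ j ∉ S, y j = z j) ∧ f (flip1 y i) ≠ f y) :
    2 ^ (n - S.card + 1) ≤ #{x | f x ≠ f (flip1 x i)} := by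
  set π : (Fin n → Bool) → ({j // j ∉ S} → Bool) := fun x j => x j
  have hfiber : ∀ b, 2 ≤ #{x ∈ ({x | f x ≠ f (flip1 x i)} : Finset _) | π x = b} := by
    intro b
    obtain ⟨y, hyb, hy⟩ := hsens fun j => if hj : j ∈ S then false else b ⟨j, hj⟩
    have hπy : π y = b := funext fun ⟨j, hj⟩ => by simp [π, hyb j hj, hj]
    have hπflip : π (flip1 y i) = b := by
      rw [← hπy]
      funext ⟨j, hj⟩
      simp [π, flip1, show j ≠ i from fun h => hj (h ▸ hiS)]
    refine Finset.one_lt_card_iff.mpr ⟨y, flip1 y i, ?_, ?_, (flip1_ne y i).symm⟩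
    · simpa [hπy] using hy.symm
    · simpa [hπflip, flip1_flip1] using hy
  rw [Finset.card_eq_sum_card_fiberwise (f := π) (t := Finset.univ)
    fun x _ => Finset.mem_coe.mpr (Finset.mem_univ _)]
  calc 2 ^ (n - S.card + 1) = ∑ _b : {j // j ∉ S} → Bool, 2 := by
        simp [pow_succ]
    _ ≤ _ := Finset.sum_le_sum fun b _ => hfiber b

lemma restrCoeff_singleton (G : (Fin n → Bool) → ℝ) (i : Fin n) (z : Fin n → Bool) :
    restrCoeff G {i} z = G (Function.update z i true) - G (Function.update z i false) := by
  have h := subcubePt_insert_right (S := {i}) (W := ∅) (Finset.mem_singleton_self i)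
    (Finset.notMem_empty i) z
  rw [insert_empty_eq, subcubePt_singleton_empty, flip1_eq_update] at h
  simp only [Function.update_self, Bool.not_false, Function.update_idem] at h
  rw [restrCoeff, ← insert_empty_eq, Finset.sum_powerset_insert (Finset.notMem_empty i)]
  simp [h, subcubePt_singleton_empty]
  ring

lemma exists_coeffS_ne_zero_of_rel (f : (Fin n → Bool) → Bool) {i : Fin n} (hrel : Rel i f) :
    ∃ S, i ∈ S ∧ coeffS (fun x => bval (f x)) S ≠ 0 := by
  obtain ⟨x, hx⟩ := hrel
  by_contra! h
  have hsing := restrCoeff_eq_coeffS _ (fun T hT => h T (hT.subset (Finset.mem_singleton_self i))) x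
  rw [restrCoeff_singleton, h {i} (Finset.mem_singleton_self i), sub_eq_zero] at hsing
  have hupd : ∀ b, f (Function.update x i b) = f (Function.update x i false) := by
    intro b
    cases b
    · rfl
    · exact bval_injective hsing
  refine hx ?_
  rw [flip1_eq_update, hupd, ← hupd (x i), Function.update_eq_self]

lemma exists_maximal_coeffS_ne_zero (f : (Fin n → Bool) → Bool) {i : Fin n} (hrel : Rel i f) :
    ∃ S, i ∈ S ∧ coeffS (fun x => bval (f x)) S ≠ 0 ∧
      ∀ T, S ⊂ T → coeffS (fun x => bval (f x)) T = 0 := by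
  obtain ⟨S₀, hiS₀, hS₀⟩ := exists_coeffS_ne_zero_of_rel f hrel
  obtain ⟨S, hS⟩ :=
    Finset.exists_maximal (s := {S | i ∈ S ∧ coeffS (fun x => bval (f x)) S ≠ 0})
      ⟨S₀, by simp [hiS₀, hS₀]⟩
  obtain ⟨hiS, hcS⟩ : i ∈ S ∧ coeffS (fun x => bval (f x)) S ≠ 0 := by simpa using hS.prop
  exact ⟨S, hiS, hcS, fun T hST => by
    by_contra hT
    exact hS.not_gt (by simp [hST.subset hiS, hT]) hST⟩

lemma card_le_degB (f : (Fin n → Bool) → Bool) {S : Finset (Fin n)}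
    (hc : coeffS (fun x => bval (f x)) S ≠ 0) : S.card ≤ degB f :=
  Finset.le_sup (f := Finset.card) (Finset.mem_filter.mpr ⟨Finset.mem_univ S, hc⟩)

lemma one_le_infl_mul_two_zpow (f : (Fin n → Bool) → Bool) {i : Fin n} (hrel : Rel i f) :
    1 ≤ infl f i * 2 ^ ((degB f : ℤ) - 1) := by
  obtain ⟨S, hiS, hc, hmax⟩ := exists_maximal_coeffS_ne_zero f hrel
  have hcount := two_pow_le_card_sensitive f hiS (exists_sensitive_in_subcube f hiS hc hmax)
  have hdeg := card_le_degB f hc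
  have hSn : S.card ≤ n := by simpa using Finset.card_le_univ S
  have hcount' : (2 : ℝ) ^ ((n : ℤ) - S.card + 1) ≤ #{x | f x ≠ f (flip1 x i)} := by
    rw [show (n : ℤ) - S.card + 1 = ((n - S.card + 1 : ℕ) : ℤ) by omega, zpow_natCast]
    exact_mod_cast hcount
  calc (1 : ℝ) ≤ 2 ^ ((degB f : ℤ) - S.card) := one_le_zpow₀ one_le_two (by omega)
    _ = 2 ^ ((n : ℤ) - S.card + 1) / 2 ^ n * 2 ^ ((degB f : ℤ) - 1) := by
      rw [← zpow_natCast, ← zpow_sub₀ two_ne_zero, ← zpow_add₀ two_ne_zero]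
      ring_nf
    _ ≤ infl f i * 2 ^ ((degB f : ℤ) - 1) := by
      unfold infl
      gcongr

end BF

/-- `n(f) ≤ I[f]·2^{deg(f)−1}`. -/
theorem stmt14 {n : ℕ} (f : (Fin n → Bool) → Bool) :
    (nrel f : ℝ) ≤ totalInf f * (2 : ℝ) ^ ((degB f : ℤ) - 1) := by
  calc (nrel f : ℝ) = ∑ i ∈ relSet f, 1 := by simp [nrel]
    _ ≤ ∑ i ∈ relSet f, infl f i * 2 ^ ((degB f : ℤ) - 1) :=
      Finset.sum_le_sum fun i hi => one_le_infl_mul_two_zpow f (by simpa [relSet] using hi)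
    _ ≤ ∑ i, infl f i * 2 ^ ((degB f : ℤ) - 1) :=
      Finset.sum_le_sum_of_subset_of_nonneg (Finset.subset_univ _) fun i _ _ => by
        unfold infl
        positivity
    _ = totalInf f * 2 ^ ((degB f : ℤ) - 1) := by rw [totalInf, Finset.sum_mul]
end
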